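/- Let N ≥ 1 and let w = (w_i^j)_{i,j=1,…,N} be nonnegative reals. Define the function Z : ℝ^N × ℝ^N → ℝ by Z(ρ_1,…,ρ_N, ρ^1,…,ρ^N) = exp(Σ_i ρ_i + Σ_j ρ^j) · ∏_{i,j} (1 + w_i^j e^{−ρ_i − ρ^j}). Then the 2N-th order mixed partial derivative ∂^{2N} Z / (∂ρ_1 ⋯ ∂ρ_N ∂ρ^1 ⋯ ∂ρ^N), evaluated at ρ_1 = ⋯ = ρ_N = ρ^1 = ⋯ = ρ^N = 0, equals Σ_{E ⊆ {1,…,N}×{1,…,N}} ( ∏_{(i,j) ∈ E} w_i^j ) · ( ∏_{i=1}^N (1 − d_i(E)) ) · ( ∏_{j=1}^N (1 − d^j(E)) ), where d_i(E) = |{j : (i,j) ∈ E}| and d^j(E) = |{i : (i,j) ∈ E}|. In particular, only the empty set E (contributing 1) and those E in which every incident vertex has degree ≥ 2 (the generalized loops) contribute to the sum. -/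

import Mathlib

/-- Partial derivative of `f : (ι → ℝ) → ℝ` in the coordinate direction `α`. -/
noncomputable def partialDeriv {ι : Type*} [Fintype ι] [DecidableEq ι] (α : ι)
    (f : (ι → ℝ) → ℝ) : (ι → ℝ) → ℝ :=
  fun x => fderiv ℝ f x (Pi.single α 1)

/-- The degree of left vertex `i` in the edge set `E ⊆ K_{N,N}`. -/
def degL {N : ℕ} (E : Finset (Fin N × Fin N)) (i : Fin N) : ℕ :=
  (E.filter (fun e => e.1 = i)).card

/-- The degree of right vertex `j` in the edge set `E ⊆ K_{N,N}`. -/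
def degR {N : ℕ} (E : Finset (Fin N × Fin N)) (j : Fin N) : ℕ :=
  (E.filter (fun e => e.2 = j)).card

/-!
Expanding the product over edges writes `Z` as a sum over edge sets `E` of exponential
monomials `(∏_{e ∈ E} w_e) · exp(∑_v (1 - d_v(E)) ρ_v)`, since each edge `(i, j)` lowers the
exponents of `ρ_i` and `ρ^j` by one. Differentiating such a monomial once in `ρ_v` multiplies
it by `1 - d_v(E)`, and at the origin the exponential is `1`. A term with an incident vertex of
degree `1` contains the factor `1 - 1 = 0`.
-/

open Finset

section ExpMonomial

variable {ι : Type*} [Fintype ι]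

noncomputable def expMonomial (a : ι → ℝ) (c : ℝ) (ρ : ι → ℝ) : ℝ :=
  c * Real.exp (∑ α, a α * ρ α)

theorem hasFDerivAt_expMonomial (a : ι → ℝ) (c : ℝ) (x : ι → ℝ) :
    HasFDerivAt (expMonomial a c)
      (expMonomial a c x • ∑ α, a α • ContinuousLinearMap.proj (R := ℝ) (φ := fun _ => ℝ) α)
      x := by
  have hlin := HasFDerivAt.fun_sum (u := univ)
    fun α _ => (hasFDerivAt_apply (𝕜 := ℝ) α x).const_mul (a α)
  have h := hlin.exp.const_mul c
  rw [smul_smul] at h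
  exact h

variable [DecidableEq ι]

theorem partialDeriv_expMonomial (a : ι → ℝ) (c : ℝ) (β : ι) :
    partialDeriv β (expMonomial a c) = expMonomial a (c * a β) := by
  funext x
  simp only [partialDeriv, (hasFDerivAt_expMonomial a c x).fderiv, expMonomial, smul_apply,
    _root_.sum_apply, ContinuousLinearMap.proj_apply, Pi.single_apply, smul_eq_mul, mul_ite,
    mul_one, mul_zero, sum_ite_eq', mem_univ, if_true]
  ring

theorem partialDeriv_fun_sum {κ : Type*} {S : Finset κ} {f : κ → (ι → ℝ) → ℝ}
    (hf : ∀ k ∈ S, Differentiable ℝ (f k)) (β : ι) :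
    partialDeriv β (fun ρ => ∑ k ∈ S, f k ρ) = fun ρ => ∑ k ∈ S, partialDeriv β (f k) ρ := by
  funext x
  simp only [partialDeriv, fderiv_fun_sum fun k hk => (hf k hk).differentiableAt,
    _root_.sum_apply]

theorem foldr_partialDeriv_sum_expMonomial {κ : Type*} (l : List ι) (S : Finset κ)
    (a : κ → ι → ℝ) (c : κ → ℝ) :
    l.foldr partialDeriv (fun ρ => ∑ k ∈ S, expMonomial (a k) (c k) ρ)
      = fun ρ => ∑ k ∈ S, expMonomial (a k) (c k * (l.map (a k)).prod) ρ := by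
  induction l generalizing c with
  | nil => simp
  | cons β l ih =>
    rw [List.foldr_cons, ih, partialDeriv_fun_sum
      fun k _ _ => (hasFDerivAt_expMonomial _ _ _).differentiableAt]
    simp only [partialDeriv_expMonomial, List.map_cons, List.prod_cons, mul_assoc,
      mul_comm (a _ β)]

end ExpMonomial

theorem prod_one_sub_eq_zero_of_eq_one {ι : Type*} [Fintype ι] {d : ι → ℕ} {v : ι}
    (hv : d v = 1) :
    ∏ u, (1 - (d u : ℝ)) = 0 :=
  prod_eq_zero (mem_univ v) (by simp [hv])

section Degrees

variable {N : ℕ}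

def oneSubDeg (E : Finset (Fin N × Fin N)) : Fin N ⊕ Fin N → ℝ :=
  Sum.elim (fun i => 1 - (degL E i : ℝ)) (fun j => 1 - (degR E j : ℝ))

theorem sum_fst_eq_sum_degL (E : Finset (Fin N × Fin N)) (f : Fin N → ℝ) :
    ∑ e ∈ E, f e.1 = ∑ i, (degL E i : ℝ) * f i := by
  simp only [← sum_fiberwise' E Prod.fst f, sum_const, degL, nsmul_eq_mul]

theorem sum_snd_eq_sum_degR (E : Finset (Fin N × Fin N)) (f : Fin N → ℝ) :
    ∑ e ∈ E, f e.2 = ∑ j, (degR E j : ℝ) * f j := by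
  simp only [← sum_fiberwise' E Prod.snd f, sum_const, degR, nsmul_eq_mul]

theorem sum_add_sum_edges_eq_sum_oneSubDeg (E : Finset (Fin N × Fin N))
    (ρ : Fin N ⊕ Fin N → ℝ) :
    (∑ i, ρ (.inl i)) + (∑ j, ρ (.inr j)) + ∑ e ∈ E, (-ρ (.inl e.1) - ρ (.inr e.2))
      = ∑ α, oneSubDeg E α * ρ α := by
  rw [sum_sub_distrib, sum_neg_distrib, sum_fst_eq_sum_degL E fun i => ρ (.inl i),
    sum_snd_eq_sum_degR E fun j => ρ (.inr j), Fintype.sum_sum_type]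
  simp only [oneSubDeg, Sum.elim_inl, Sum.elim_inr, sub_mul, one_mul,
    sum_sub_distrib]
  ring

theorem exp_mul_prod_eq_sum_expMonomial (w : Fin N → Fin N → ℝ) (ρ : Fin N ⊕ Fin N → ℝ) :
    Real.exp ((∑ i, ρ (.inl i)) + ∑ j, ρ (.inr j)) *
        ∏ i, ∏ j, (1 + w i j * Real.exp (-ρ (.inl i) - ρ (.inr j)))
      = ∑ E : Finset (Fin N × Fin N), expMonomial (oneSubDeg E) (∏ e ∈ E, w e.1 e.2) ρ := by
  rw [← Fintype.prod_prod_type' (f := fun i j => 1 + w i j * Real.exp (-ρ (.inl i) - ρ (.inr j))),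
    prod_one_add, powerset_univ, mul_sum]
  refine sum_congr rfl fun E _ => ?_
  rw [prod_mul_distrib, ← Real.exp_sum, expMonomial,
    ← sum_add_sum_edges_eq_sum_oneSubDeg]
  simp only [Real.exp_add]
  ring

theorem prod_map_oneSubDeg_finRange (E : Finset (Fin N × Fin N)) :
    (((List.finRange N).map Sum.inl ++ (List.finRange N).map Sum.inr).map (oneSubDeg E)).prod
      = (∏ i, (1 - (degL E i : ℝ))) * ∏ j, (1 - (degR E j : ℝ)) := by
  simp only [List.map_append, List.prod_append, List.map_map, Fin.prod_univ_def]
  rfl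

theorem degL_pos {E : Finset (Fin N × Fin N)} {e : Fin N × Fin N} (he : e ∈ E) :
    0 < degL E e.1 :=
  card_pos.mpr ⟨e, mem_filter.mpr ⟨he, rfl⟩⟩

theorem degR_pos {E : Finset (Fin N × Fin N)} {e : Fin N × Fin N} (he : e ∈ E) :
    0 < degR E e.2 :=
  card_pos.mpr ⟨e, mem_filter.mpr ⟨he, rfl⟩⟩

end Degrees

theorem mixed_deriv_eq_loop_sum_general (N : ℕ)
    (w : Fin N → Fin N → ℝ) :
    ((List.foldr partialDeriv
        (fun ρ : (Fin N ⊕ Fin N) → ℝ =>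
          Real.exp ((∑ i, ρ (Sum.inl i)) + ∑ j, ρ (Sum.inr j)) *
            ∏ i, ∏ j, (1 + w i j * Real.exp (-ρ (Sum.inl i) - ρ (Sum.inr j))))
        (((List.finRange N).map Sum.inl) ++ ((List.finRange N).map Sum.inr)))
      0 =
      ∑ E : Finset (Fin N × Fin N),
        (∏ e ∈ E, w e.1 e.2) * (∏ i, (1 - (degL E i : ℝ))) *
          ∏ j, (1 - (degR E j : ℝ))) ∧
    (∀ E : Finset (Fin N × Fin N), E.Nonempty →
      (∃ e ∈ E, degL E e.1 < 2 ∨ degR E e.2 < 2) →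
      (∏ e ∈ E, w e.1 e.2) * (∏ i, (1 - (degL E i : ℝ))) *
          ∏ j, (1 - (degR E j : ℝ)) = 0) := by
  constructor
  · rw [funext (exp_mul_prod_eq_sum_expMonomial w), foldr_partialDeriv_sum_expMonomial]
    simp only [prod_map_oneSubDeg_finRange, expMonomial, Pi.zero_apply, mul_zero, sum_const_zero,
      Real.exp_zero, mul_one, mul_assoc]
  · rintro E - ⟨e, he, hL | hR⟩
    · rw [prod_one_sub_eq_zero_of_eq_one (d := degL E) (v := e.1) (by have := degL_pos he; omega)]
      ring
    · rw [prod_one_sub_eq_zero_of_eq_one (d := degR E) (v := e.2) (by have := degR_pos he; omega)]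
      ring

/-- The `2N`-th mixed partial derivative (once in each variable
`ρ_1, …, ρ_N, ρ^1, …, ρ^N`) of
`Z(ρ) = exp(Σ_i ρ_i + Σ_j ρ^j) ∏_{i,j} (1 + w_i^j e^{-ρ_i - ρ^j})`, evaluated at the
origin, equals `Σ_{E ⊆ edges} (∏_{(i,j)∈E} w_i^j)(∏_i (1 - d_i(E)))(∏_j (1 - d^j(E)))`.
Moreover every term with `E` nonempty in which some incident vertex has degree < 2
vanishes, so only the empty set (contributing 1) and the generalized loops contribute. -/
theorem mixed_deriv_eq_loop_sum (N : ℕ) (hN : 1 ≤ N)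
    (w : Fin N → Fin N → ℝ) (hw : ∀ i j, 0 ≤ w i j) :
    ((List.foldr partialDeriv
        (fun ρ : (Fin N ⊕ Fin N) → ℝ =>
          Real.exp ((∑ i, ρ (Sum.inl i)) + ∑ j, ρ (Sum.inr j)) *
            ∏ i, ∏ j, (1 + w i j * Real.exp (-ρ (Sum.inl i) - ρ (Sum.inr j))))
        (((List.finRange N).map Sum.inl) ++ ((List.finRange N).map Sum.inr)))
      0 =
      ∑ E : Finset (Fin N × Fin N),
        (∏ e ∈ E, w e.1 e.2) * (∏ i, (1 - (degL E i : ℝ))) *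
          ∏ j, (1 - (degR E j : ℝ))) ∧
    (∀ E : Finset (Fin N × Fin N), E.Nonempty →
      (∃ e ∈ E, degL E e.1 < 2 ∨ degR E e.2 < 2) →
      (∏ e ∈ E, w e.1 e.2) * (∏ i, (1 - (degL E i : ℝ))) *
          ∏ j, (1 - (degR E j : ℝ)) = 0) :=
  mixed_deriv_eq_loop_sum_general N w
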